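/- arXiv:math/9906207 — 6 statements merged into one kernel-verified Lean document; each statement's English description precedes it below -/
import Mathlib

section
/- Every cycle of a unimodal permutation is unimodal in shape: if δ ∈ Δ(n) is unimodal and J ⊆ {1,...,n} is the support of a cycle of δ (so δ(J) = J and δ restricted to J acts as a single cycle), then the permutation Ω_J⁻¹ ∘ δ ∘ Ω_J of {1,...,|J|}, where Ω_J is the unique increasing bijection from {1,...,|J|} to J, is unimodal. -/
/-- `δ` is unimodal with peak `m`: strictly increasing on `{0,...,m}` and
strictly decreasing on `{m,...,n-1}`. -/
def IsUnimodalPeak {n : ℕ} (δ : Equiv.Perm (Fin n)) (m : Fin n) : Prop :=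
  (∀ a b : Fin n, a < b → b ≤ m → δ a < δ b) ∧
  (∀ a b : Fin n, m ≤ a → a < b → δ b < δ a)

/-- A permutation of `Fin n` is unimodal if it has a peak. -/
def IsUnimodal {n : ℕ} (δ : Equiv.Perm (Fin n)) : Prop :=
  ∃ m, IsUnimodalPeak δ m

/-- A permutation is transitive (a single `n`-cycle) if every point can be
mapped to every other point by iteration. -/
def IsTransitive {n : ℕ} (δ : Equiv.Perm (Fin n)) : Prop :=
  ∀ x y : Fin n, ∃ i : ℕ, (δ ^ i) x = y

/-- The unique increasing map `Ω_J` from `Fin k` onto the subset `J` of size `k`. -/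
def omegaMap {n k : ℕ} (J : Finset (Fin n)) (h : J.card = k) : Fin k → Fin n :=
  fun a => (J.orderIsoOfFin h a : Fin n)

/-- `J` is the support of a single cycle of `δ`: nonempty, invariant, and `δ`
acts transitively on it. -/
def IsCycleSupport {n : ℕ} (δ : Equiv.Perm (Fin n)) (J : Finset (Fin n)) : Prop :=
  J.Nonempty ∧ (∀ x ∈ J, δ x ∈ J) ∧ ∀ x ∈ J, ∀ y ∈ J, ∃ i : ℕ, (δ ^ i) x = y

/-- Every cycle of a unimodal permutation has unimodal shape: if `σ` is the
conjugate `Ω_J⁻¹ ∘ δ ∘ Ω_J` of `δ` restricted to a cycle support `J`, then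
`σ` is unimodal. -/
theorem cycle_shape_unimodal (n : ℕ) (δ : Equiv.Perm (Fin n)) (hδ : IsUnimodal δ)
    (J : Finset (Fin n)) (hJ : IsCycleSupport δ J) (σ : Equiv.Perm (Fin J.card))
    (hσ : ∀ i : Fin J.card,
      (J.orderIsoOfFin rfl (σ i) : Fin n) = δ (J.orderIsoOfFin rfl i)) :
    IsUnimodal σ := by
  obtain ⟨m, hm1, hm2⟩ := hδ
  have hpos : 0 < J.card := Finset.card_pos.mpr hJ.1
  set ω : Fin J.card ≃o {x // x ∈ J} := J.orderIsoOfFin rfl with hωdef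
  have hlt : ∀ a b : Fin J.card, σ a < σ b ↔ δ (ω a : Fin n) < δ (ω b : Fin n) := by
    intro a b
    rw [← hσ a, ← hσ b, Subtype.coe_lt_coe, ω.lt_iff_lt]
  have hωlt : ∀ a b : Fin J.card, a < b ↔ (ω a : Fin n) < (ω b : Fin n) := by
    intro a b
    rw [Subtype.coe_lt_coe, ω.lt_iff_lt]
  have hωle : ∀ a b : Fin J.card, a ≤ b → (ω a : Fin n) ≤ (ω b : Fin n) := by
    intro a b h
    exact Subtype.coe_le_coe.mpr (ω.le_iff_le.mpr h)
  have hne : ∀ a b : Fin J.card, a ≠ b → δ (ω a : Fin n) ≠ δ (ω b : Fin n) := by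
    intro a b hab h
    exact hab (ω.injective (Subtype.coe_injective (δ.injective h)))
  by_cases hS : ∃ i : Fin J.card, (ω i : Fin n) ≤ m
  case neg =>
    -- all of J is above the peak: σ is strictly decreasing, peak 0
    push_neg at hS
    refine ⟨⟨0, hpos⟩, ?_, ?_⟩
    · intro a b hab hb
      exact absurd (lt_of_lt_of_le hab hb) (by simp [Fin.lt_def])
    · intro a b _ hab
      rw [hlt]
      exact hm2 _ _ (le_of_lt (hS a)) ((hωlt a b).mp hab)
  case pos =>
    set S := Finset.univ.filter (fun i : Fin J.card => (ω i : Fin n) ≤ m) with hSdef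
    have hSne : S.Nonempty := by
      obtain ⟨i, hi⟩ := hS; exact ⟨i, by simp [hSdef, hi]⟩
    set p := S.max' hSne with hp
    have hpm : (ω p : Fin n) ≤ m := by
      have := S.max'_mem hSne
      simp only [hSdef, Finset.mem_filter] at this
      exact this.2
    have hgt : ∀ i : Fin J.card, p < i → m < (ω i : Fin n) := by
      intro i hi
      by_contra h
      push_neg at h
      exact absurd (S.le_max' i (by simp [hSdef, h])) (not_le.mpr hi)
    have inc : ∀ a b : Fin J.card, a < b → b ≤ p → σ a < σ b := by
      intro a b hab hbp
      rw [hlt]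
      exact hm1 _ _ ((hωlt a b).mp hab) (le_trans (hωle b p hbp) hpm)
    by_cases hlast : (p : ℕ) + 1 < J.card
    case neg =>
      -- p is the last index: σ is strictly increasing, peak p
      refine ⟨p, inc, ?_⟩
      intro a b hpa hab
      exfalso
      have : (b : ℕ) < J.card := b.isLt
      have h1 : (p : ℕ) < (b : ℕ) := lt_of_le_of_lt hpa hab
      omega
    case pos =>
      set s : Fin J.card := ⟨(p : ℕ) + 1, hlast⟩ with hs
      have hps : p < s := by simp [hs, Fin.lt_def]
      have hms : m < (ω s : Fin n) := hgt s hps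
      rcases lt_or_gt_of_ne (hne p s (ne_of_lt hps)) with h | h
      · -- peak is s
        refine ⟨s, ?_, ?_⟩
        · intro a b hab hbs
          by_cases hbp : b ≤ p
          · exact inc a b hab hbp
          · have hbeq : b = s := by
              rw [Fin.ext_iff]
              have h1 : (p : ℕ) < (b : ℕ) := by
                by_contra hc; exact hbp (by omega)
              have h2 : (b : ℕ) ≤ (s : ℕ) := hbs
              simp only [hs] at h2 ⊢
              omega
            subst hbeq
            have hap : a ≤ p := by
              have := hab
              simp only [Fin.lt_def, hs] at this
              exact Fin.le_def.mpr (by omega)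
            rcases eq_or_lt_of_le hap with rfl | hap'
            · exact (hlt _ _).mpr h
            · exact lt_trans (inc a p hap' le_rfl) ((hlt _ _).mpr h)
        · intro a b hsa hab
          rw [hlt]
          exact hm2 _ _ (le_of_lt (hgt a (lt_of_lt_of_le hps hsa))) ((hωlt a b).mp hab)
      · -- peak is p
        refine ⟨p, inc, ?_⟩
        intro a b hpa hab
        rcases eq_or_lt_of_le hpa with rfl | hpa'
        · -- a = p
          have hsb : s ≤ b := by
            rw [Fin.le_def]
            have := Fin.lt_def.mp hab
            simp only [hs]
            omega
          rcases eq_or_lt_of_le hsb with rfl | hsb'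
          · exact (hlt _ _).mpr h
          · have h1 : σ b < σ s := by
              rw [hlt]
              exact hm2 _ _ (le_of_lt hms) ((hωlt s b).mp hsb')
            exact lt_trans h1 ((hlt _ _).mpr h)
        · rw [hlt]
          exact hm2 _ _ (le_of_lt (hgt a hpa')) ((hωlt a b).mp hab)
end

section
/- The number of unimodal n-cycles (transitive unimodal permutations of {1,...,n}) equals (1/n) · Σ_{d | n, d odd} μ(d) · 2^(n/d - 1), where μ is the Möbius function. -/
/-!
Mark a point `x` of a unimodal `n`-cycle `δ` and follow its orbit, writing `false` for points left
of the peak and `true` for points right of it; the peak itself gets whichever letter makes the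
number of `true`s per period odd. The resulting itinerary has exact period `n`, and the points of
the orbit are ordered exactly like the shifts of the itinerary in the kneading order (lexicographic
order of prefix parities, in which a `true` letter reverses the order of the tails, as the
decreasing branch does). Conversely, ordering the `n` shifts of such a sequence in kneading order
and letting the shift act on the ranks produces a marked unimodal `n`-cycle. Hence `n · |Δ_n|` is
the number `P(n)` of sequences of exact period `n` with an odd number of `true`s per period.
Sorting the `2^(m-1)` odd `m`-periodic sequences by exact period `q` gives
`∑_{q ∣ m, m/q odd} P(q) = 2^(m-1)`, and Möbius inversion over odd divisors yields the formula.
-/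

open Function
open scoped ArithmeticFunction.Moebius

namespace ArithmeticFunction

def oddIndicator (R : Type*) [Semiring R] : ArithmeticFunction R :=
  ⟨fun k => if Odd k then 1 else 0, by simp⟩

theorem oddIndicator_apply {R : Type*} [Semiring R] (k : ℕ) :
    oddIndicator R k = if Odd k then 1 else 0 := rfl

-- `oddIndicator` is completely multiplicative, so its Dirichlet inverse is `μ` twisted by it.
theorem oddIndicator_mul_pmul_moebius (R : Type*) [CommRing R] :
    oddIndicator R * (↑μ : ArithmeticFunction R).pmul (oddIndicator R) = 1 := by
  ext k
  have hsum : ∑ x ∈ k.divisorsAntidiagonal, (μ x.2 : R) = (1 : ArithmeticFunction R) k := by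
    rw [← coe_zeta_mul_coe_moebius, coe_zeta_mul_apply,
      Nat.sum_divisorsAntidiagonal' (fun _ b => (μ b : R))]
    simp
  simp only [mul_apply, pmul_apply]
  calc ∑ x ∈ k.divisorsAntidiagonal, oddIndicator R x.1 * (μ x.2 * oddIndicator R x.2)
      = ∑ x ∈ k.divisorsAntidiagonal, oddIndicator R k * (μ x.2 : R) := by
        refine Finset.sum_congr rfl fun x hx => ?_
        rw [← (Nat.mem_divisorsAntidiagonal.1 hx).1]
        simp only [oddIndicator_apply, Nat.odd_mul]
        split_ifs <;> simp_all
    _ = (1 : ArithmeticFunction R) k := by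
        rw [← Finset.mul_sum, hsum, one_apply]
        split_ifs with hk <;> simp [hk, oddIndicator_apply]

theorem eq_sum_odd_moebius_of_sum_odd_cofactor {R : Type*} [CommRing R] {f g : ℕ → R}
    (h : ∀ m, 0 < m → ∑ q ∈ m.divisors with Odd (m / q), f q = g m) {n : ℕ} (hn : 0 < n) :
    f n = ∑ d ∈ n.divisors with Odd d, (μ d : R) * g (n / d) := by
  let F : ArithmeticFunction R := ⟨fun k => if k = 0 then 0 else f k, if_pos rfl⟩
  have hF : ∀ m, 0 < m → (F * oddIndicator R) m = g m := by
    intro m hm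
    rw [mul_apply, Nat.sum_divisorsAntidiagonal (fun a b => F a * oddIndicator R b), ← h m hm,
      Finset.sum_filter]
    refine Finset.sum_congr rfl fun q hq => ?_
    simp [F, oddIndicator_apply, (Nat.pos_of_mem_divisors hq).ne']
  calc f n = F n := (if_neg hn.ne').symm
    _ = (F * oddIndicator R * (↑μ : ArithmeticFunction R).pmul (oddIndicator R)) n := by
        rw [mul_assoc, oddIndicator_mul_pmul_moebius, mul_one]
    _ = _ := by
        rw [mul_apply, Nat.sum_divisorsAntidiagonal' (fun a b =>
          (F * oddIndicator R) a * (↑μ : ArithmeticFunction R).pmul (oddIndicator R) b),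
          Finset.sum_filter]
        refine Finset.sum_congr rfl fun d hd => ?_
        rw [hF _ (Nat.div_pos (Nat.divisor_le hd) (Nat.pos_of_mem_divisors hd)), pmul_apply,
          oddIndicator_apply]
        split_ifs <;> simp [mul_comm]

end ArithmeticFunction

namespace Kneading

def shift (s : ℕ → Bool) : ℕ → Bool := fun k => s (k + 1)

theorem iterate_shift_apply (s : ℕ → Bool) (i k : ℕ) : shift^[i] s k = s (k + i) := by
  induction i generalizing s with
  | zero => rfl
  | succ i ih => rw [iterate_succ_apply, ih]; rfl

theorem shift_iterate_apply_zero (s : ℕ → Bool) (k : ℕ) : shift^[k] s 0 = s k := by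
  rw [iterate_shift_apply, zero_add]

theorem apply_mod_of_isPeriodicPt {s : ℕ → Bool} {n : ℕ} (hs : IsPeriodicPt shift n s)
    (k : ℕ) : s (k % n) = s k := by
  simpa [iterate_shift_apply] using congrFun (hs.iterate_mod_apply k) 0

def prefixXor (s : ℕ → Bool) : ℕ → Bool
  | 0 => false
  | k + 1 => xor (prefixXor s k) (s k)

theorem prefixXor_add (s : ℕ → Bool) (a b : ℕ) :
    prefixXor s (a + b) = xor (prefixXor s a) (prefixXor (shift^[a] s) b) := by
  induction b with
  | zero => simp [prefixXor]
  | succ b ih =>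
    rw [← add_assoc, prefixXor, ih, prefixXor, iterate_shift_apply, add_comm b a, Bool.xor_assoc]

theorem prefixXor_succ_shift (s : ℕ → Bool) (k : ℕ) :
    prefixXor s (k + 1) = xor (s 0) (prefixXor (shift s) k) := by
  rw [add_comm, prefixXor_add, iterate_one]
  simp [prefixXor]

theorem prefixXor_congr {s t : ℕ → Bool} {n : ℕ} (h : ∀ k < n, s k = t k) :
    prefixXor s n = prefixXor t n := by
  induction n with
  | zero => rfl
  | succ n ih => rw [prefixXor, prefixXor, ih fun k hk => h k (by omega), h n (by omega)]

theorem prefixXor_eq_not_of_ne_at {s t : ℕ → Bool} {n k₀ : ℕ} (hk₀ : k₀ < n) (hne : s k₀ ≠ t k₀)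
    (h : ∀ k < n, k ≠ k₀ → s k = t k) : prefixXor s n = !prefixXor t n := by
  induction n with
  | zero => omega
  | succ n ih =>
    rw [prefixXor, prefixXor]
    rcases (Nat.lt_succ_iff.1 hk₀).lt_or_eq with hlt | rfl
    · rw [ih hlt fun k hk => h k (by omega), h n (by omega) (by omega), Bool.not_xor]
    · rw [prefixXor_congr fun k hk => h k (by omega) (by omega), Bool.eq_not_of_ne hne,
        Bool.xor_not]

theorem prefixXor_mul {s : ℕ → Bool} {q : ℕ} (hs : IsPeriodicPt shift q s) (c : ℕ) :
    prefixXor s (c * q) = (decide (Odd c) && prefixXor s q) := by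
  induction c with
  | zero => simp [prefixXor]
  | succ c ih =>
    rw [add_mul, one_mul, prefixXor_add, (hs.const_mul c).eq, ih]
    by_cases hc : Odd c <;> cases prefixXor s q <;> simp [hc, Nat.odd_add_one]

theorem prefixXor_eq_of_isPeriodicPt {s : ℕ → Bool} {m : ℕ} (hs : IsPeriodicPt shift m s) :
    prefixXor s m = (decide (Odd (m / minimalPeriod shift s)) &&
      prefixXor s (minimalPeriod shift s)) := by
  conv_lhs => rw [← Nat.div_mul_cancel hs.minimalPeriod_dvd]
  exact prefixXor_mul (isPeriodicPt_minimalPeriod _ _) _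

def kneadingKey (s : ℕ → Bool) : Lex (ℕ → Bool) := toLex fun k => prefixXor s (k + 1)

theorem kneadingKey_injective : Injective kneadingKey := by
  intro s t h
  have hp : ∀ k, prefixXor s k = prefixXor t k := by
    rintro (_ | k)
    · rfl
    · exact congrFun h k
  funext k
  simpa [prefixXor, hp k] using hp (k + 1)

theorem toLex_lt_toLex_iff_head_tail {β : Type*} [LinearOrder β] {a b : ℕ → β} :
    toLex a < toLex b ↔
      a 0 < b 0 ∨ a 0 = b 0 ∧ toLex (fun k => a (k + 1)) < toLex (fun k => b (k + 1)) := by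
  constructor
  · rintro ⟨_ | i, hpre, hi⟩
    · exact Or.inl hi
    · exact Or.inr ⟨hpre 0 i.succ_pos, i, fun j hj => hpre (j + 1) (by omega), hi⟩
  · rintro (h | ⟨h0, i, hpre, hi⟩)
    · exact ⟨0, fun j hj => absurd hj j.not_lt_zero, h⟩
    · refine ⟨i + 1, fun j hj => ?_, hi⟩
      rcases j with _ | j
      exacts [h0, hpre j (by omega)]

theorem toLex_not_lt_toLex_not {a b : ℕ → Bool} :
    toLex (fun k => !a k) < toLex (fun k => !b k) ↔ toLex b < toLex a := by
  show (∃ i, (∀ j, j < i → (!a j) = !b j) ∧ (!a i) < !b i) ↔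
    ∃ i, (∀ j, j < i → b j = a j) ∧ b i < a i
  refine exists_congr fun i => and_congr (forall₂_congr fun j _ => ?_) ?_
  · rw [Bool.not_inj_iff, eq_comm]
  · cases a i <;> cases b i <;> decide

theorem kneadingKey_lt_iff {s t : ℕ → Bool} :
    kneadingKey s < kneadingKey t ↔ s 0 < t 0 ∨ s 0 = t 0 ∧
      toLex (fun k => xor (s 0) (prefixXor (shift s) (k + 1))) <
        toLex (fun k => xor (t 0) (prefixXor (shift t) (k + 1))) := by
  have head (u : ℕ → Bool) : prefixXor u (0 + 1) = u 0 := by simp [prefixXor]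
  rw [kneadingKey, kneadingKey, toLex_lt_toLex_iff_head_tail]
  simp only [head, prefixXor_succ_shift s (_ + 1), prefixXor_succ_shift t (_ + 1)]

theorem kneadingKey_lt_iff_of_ne {s t : ℕ → Bool} (h : s 0 ≠ t 0) :
    kneadingKey s < kneadingKey t ↔ s 0 < t 0 := by
  rw [kneadingKey_lt_iff, or_iff_left (not_and_of_not_left _ h)]

theorem kneadingKey_lt_iff_of_false {s t : ℕ → Bool} (hs : s 0 = false) (ht : t 0 = false) :
    kneadingKey s < kneadingKey t ↔ kneadingKey (shift s) < kneadingKey (shift t) := by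
  rw [kneadingKey_lt_iff, hs, ht]
  simp only [lt_self_iff_false, true_and, false_or, Bool.false_xor]
  rfl

theorem kneadingKey_lt_iff_of_true {s t : ℕ → Bool} (hs : s 0 = true) (ht : t 0 = true) :
    kneadingKey s < kneadingKey t ↔ kneadingKey (shift t) < kneadingKey (shift s) := by
  rw [kneadingKey_lt_iff, hs, ht]
  simp only [lt_self_iff_false, true_and, false_or, Bool.true_xor]
  exact toLex_not_lt_toLex_not

theorem monotone_bool_of_forall_lt {α : Type*} [LinearOrder α] {c : α → Bool}
    (h : ∀ y z, c y = true → c z = false → z < y) : Monotone c := by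
  intro y z hyz
  cases hz : c z
  · cases hy : c y
    · exact le_rfl
    · exact absurd hyz (h y z hy hz).not_ge
  · exact Bool.le_true _

section LapLabel

variable {α : Type*} {T : α → α} {c : α → Bool}

def itinerary (T : α → α) (c : α → Bool) (y : α) : ℕ → Bool := fun k => c (T^[k] y)

theorem itinerary_iterate (k : ℕ) (y : α) :
    itinerary T c (T^[k] y) = shift^[k] (itinerary T c y) := by
  funext j
  simp only [itinerary, iterate_shift_apply, ← iterate_add_apply]

theorem shift_itinerary (y : α) : shift (itinerary T c y) = itinerary T c (T y) :=
  (itinerary_iterate 1 y).symm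

variable [LinearOrder α]

structure IsLapLabel (T : α → α) (c : α → Bool) : Prop where
  monotone : Monotone c
  strictMonoOn : StrictMonoOn T {y | c y = false}
  strictAntiOn : StrictAntiOn T {y | c y = true}

namespace IsLapLabel

theorem lt_iff_of_ne (h : IsLapLabel T c) {y z : α} (hyz : c y ≠ c z) : y < z ↔ c y < c z :=
  ⟨fun hlt => (h.monotone hlt.le).lt_of_ne hyz, h.monotone.reflect_lt⟩

theorem kneadingKey_itinerary_lt_iff (h : IsLapLabel T c) {y z : α}
    (hyz : itinerary T c y ≠ itinerary T c z) :
    kneadingKey (itinerary T c y) < kneadingKey (itinerary T c z) ↔ y < z := by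
  obtain ⟨K, hK⟩ := ne_iff.1 hyz
  clear hyz
  induction K generalizing y z with
  | zero => exact (kneadingKey_lt_iff_of_ne hK).trans (h.lt_iff_of_ne hK).symm
  | succ K ih =>
    by_cases hc : c y = c z
    · have ih_yz := @ih (T y) (T z) hK
      have ih_zy := @ih (T z) (T y) hK.symm
      simp only [← shift_itinerary] at ih_yz ih_zy
      cases hcy : c y
      · have hcz : c z = false := hc ▸ hcy
        rw [kneadingKey_lt_iff_of_false hcy hcz, ih_yz, h.strictMonoOn.lt_iff_lt hcy hcz]
      · have hcz : c z = true := hc ▸ hcy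
        rw [kneadingKey_lt_iff_of_true hcy hcz, ih_zy, h.strictAntiOn.lt_iff_gt hcz hcy]
    · exact (kneadingKey_lt_iff_of_ne hc).trans (h.lt_iff_of_ne hc).symm

theorem decide_iterate_lt (h : IsLapLabel T c) {y z : α}
    (hyz : itinerary T c y = itinerary T c z) (hne : ∀ k, T^[k] y ≠ T^[k] z) (k : ℕ) :
    decide (T^[k] y < T^[k] z) = xor (decide (y < z)) (prefixXor (itinerary T c y) k) := by
  induction k with
  | zero => exact (Bool.xor_false _).symm
  | succ k ih =>
    have hc : c (T^[k] y) = c (T^[k] z) := congrFun hyz k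
    rw [prefixXor, ← Bool.xor_assoc, ← ih, iterate_succ_apply', iterate_succ_apply']
    change _ = xor _ (c (T^[k] y))
    cases hcy : c (T^[k] y)
    · have hcz : c (T^[k] z) = false := hc ▸ hcy
      rw [Bool.xor_false]
      exact decide_eq_decide.2 (h.strictMonoOn.lt_iff_lt hcy hcz)
    · have hcz : c (T^[k] z) = true := hc ▸ hcy
      simp only [Bool.xor_true, h.strictAntiOn.lt_iff_gt hcy hcz]
      rcases (hne k).lt_or_gt with hlt | hlt <;> simp [hlt, hlt.not_gt]

theorem prefixXor_itinerary_eq_false (h : IsLapLabel T c) {y z : α}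
    (hyz : itinerary T c y = itinerary T c z) (hne : ∀ k, T^[k] y ≠ T^[k] z) {n : ℕ}
    (hy : T^[n] y = y) (hz : T^[n] z = z) : prefixXor (itinerary T c y) n = false := by
  have := h.decide_iterate_lt hyz hne n
  simp only [hy, hz] at this
  revert this
  cases decide (y < z) <;> simp

section Peak

variable [OrderTop α] {δ : Equiv.Perm α}

theorem label_eq_false_of_lt (h : IsLapLabel δ c) {y : α} (hy : y < δ.symm ⊤) :
    c y = false := by
  by_contra hcy
  rw [Bool.not_eq_false] at hcy
  cases hp : c (δ.symm ⊤)
  · exact hy.not_gt (h.monotone.reflect_lt (by simp [hp, hcy]))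
  · exact not_top_lt (δ.apply_symm_apply ⊤ ▸ h.strictAntiOn hcy hp hy)

theorem label_eq_true_of_gt (h : IsLapLabel δ c) {y : α} (hy : δ.symm ⊤ < y) :
    c y = true := by
  by_contra hcy
  rw [Bool.not_eq_true] at hcy
  cases hp : c (δ.symm ⊤)
  · exact not_top_lt (δ.apply_symm_apply ⊤ ▸ h.strictMonoOn hp hcy hy)
  · exact hy.not_gt (h.monotone.reflect_lt (by simp [hp, hcy]))

theorem label_eq_decide (h : IsLapLabel δ c) {y : α} (hy : y ≠ δ.symm ⊤) :
    c y = decide (δ.symm ⊤ < y) := by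
  rcases hy.lt_or_gt with hlt | hlt
  · simp [h.label_eq_false_of_lt hlt, hlt.not_gt]
  · simp [h.label_eq_true_of_gt hlt, hlt]

end Peak

theorem isUnimodalPeak {n : ℕ} [NeZero n] {δ : Equiv.Perm (Fin n)} {c : Fin n → Bool}
    (h : IsLapLabel δ c) : IsUnimodalPeak δ (δ.symm ⊤) := by
  have lt_top {a : Fin n} (ha : a ≠ δ.symm ⊤) : δ a < ⊤ :=
    lt_top_iff_ne_top.2 fun h' => ha (δ.eq_symm_apply.2 h')
  constructor
  · intro a b hab hbp
    rcases hbp.lt_or_eq with hbp | rfl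
    · exact h.strictMonoOn (h.label_eq_false_of_lt (hab.trans hbp)) (h.label_eq_false_of_lt hbp)
        hab
    · rw [δ.apply_symm_apply]
      exact lt_top hab.ne
  · intro a b hpa hab
    rcases hpa.lt_or_eq with hpa | rfl
    · exact h.strictAntiOn (h.label_eq_true_of_gt hpa) (h.label_eq_true_of_gt (hpa.trans hab))
        hab
    · rw [δ.apply_symm_apply]
      exact lt_top hab.ne'

end IsLapLabel

end LapLabel

def peakLabel {α : Type*} [LinearOrder α] (m : α) (b : Bool) (y : α) : Bool :=
  if y = m then b else decide (m < y)

section PeakLabel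

variable {α : Type*} [LinearOrder α] {m y : α} {b : Bool}

theorem le_of_peakLabel_eq_false (h : peakLabel m b y = false) : y ≤ m := by
  unfold peakLabel at h
  split_ifs at h with hy
  · exact hy.le
  · exact not_lt.1 (of_decide_eq_false h)

theorem le_of_peakLabel_eq_true (h : peakLabel m b y = true) : m ≤ y := by
  unfold peakLabel at h
  split_ifs at h with hy
  · exact hy.ge
  · exact (of_decide_eq_true h).le

end PeakLabel

end Kneading

open Kneading

section Unimodal

variable {n : ℕ}

theorem IsUnimodalPeak.isLapLabel {δ : Equiv.Perm (Fin n)} {m : Fin n} (h : IsUnimodalPeak δ m)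
    (b : Bool) : IsLapLabel δ (peakLabel m b) where
  monotone := monotone_bool_of_forall_lt fun y z hy hz =>
    ((le_of_peakLabel_eq_false hz).trans (le_of_peakLabel_eq_true hy)).lt_of_ne <| by
      rintro rfl
      simp_all
  strictMonoOn _ _ z hz hyz := h.1 _ z hyz (le_of_peakLabel_eq_false hz)
  strictAntiOn y hy _ _ hyz := h.2 y _ (le_of_peakLabel_eq_true hy) hyz

theorem IsTransitive.isCycleOn {δ : Equiv.Perm (Fin n)} (h : IsTransitive δ) :
    δ.IsCycleOn (Finset.univ : Finset (Fin n)) := by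
  rw [Finset.coe_univ]
  refine ⟨δ.bijective.bijOn_univ, fun x _ y _ => ?_⟩
  obtain ⟨i, hi⟩ := h x y
  exact ⟨i, by simpa using hi⟩

theorem IsTransitive.pow_apply_eq_pow_apply {δ : Equiv.Perm (Fin n)} (h : IsTransitive δ)
    (x : Fin n) {k l : ℕ} : (δ ^ k) x = (δ ^ l) x ↔ k ≡ l [MOD n] := by
  simpa using h.isCycleOn.pow_apply_eq_pow_apply (Finset.mem_univ x)

theorem IsTransitive.pow_card_apply {δ : Equiv.Perm (Fin n)} (h : IsTransitive δ) (x : Fin n) :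
    (δ ^ n) x = x := by
  simpa using h.isCycleOn.pow_card_apply (Finset.mem_univ x)

end Unimodal

namespace Kneading

noncomputable section Forward

variable (n : ℕ) [NeZero n] (s : ℕ → Bool)

def rotationKey (i : Fin n) : Lex (ℕ → Bool) := kneadingKey (shift^[i] s)

def rankPerm : Equiv.Perm (Fin n) := (Tuple.sort (rotationKey n s)).symm

def rank (k : ℕ) : Fin n := rankPerm n s (Fin.ofNat n k)

def kneadingPerm : Equiv.Perm (Fin n) :=
  (rankPerm n s).symm.trans ((Equiv.addRight 1).trans (rankPerm n s))

def rankLabel (a : Fin n) : Bool := s ((rankPerm n s).symm a)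

variable {n s}

theorem rank_lt_rank_iff (hs : minimalPeriod shift s = n) (k l : ℕ) :
    rank n s k < rank n s l ↔ kneadingKey (shift^[k] s) < kneadingKey (shift^[l] s) := by
  have hinj : Injective (rotationKey n s) := fun i j h => Fin.ext <|
    (iterate_eq_iterate_iff_of_lt_minimalPeriod (hs ▸ i.2) (hs ▸ j.2)).1
      (kneadingKey_injective h)
  have hmono : StrictMono (rotationKey n s ∘ Tuple.sort (rotationKey n s)) :=
    (Tuple.monotone_sort _).strictMono_of_injective (hinj.comp (Tuple.sort _).injective)
  have hkey (k : ℕ) : rotationKey n s (Fin.ofNat n k) = kneadingKey (shift^[k] s) := by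
    rw [rotationKey, Fin.val_ofNat, ← hs, iterate_mod_minimalPeriod_eq]
  rw [← hkey, ← hkey, ← hmono.lt_iff_lt]
  simp only [rank, rankPerm, comp_apply, Equiv.apply_symm_apply]
  exact Iff.rfl

theorem rank_eq_rank_iff {k l : ℕ} (hk : k < n) (hl : l < n) :
    rank n s k = rank n s l ↔ k = l := by
  simp [rank, Fin.ext_iff, Nat.mod_eq_of_lt hk, Nat.mod_eq_of_lt hl]

theorem rank_add_card (k : ℕ) : rank n s (k + n) = rank n s k := by
  simp [rank, Fin.ofNat, Nat.add_mod_right]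

theorem exists_rank_eq (a : Fin n) : ∃ k < n, rank n s k = a :=
  ⟨((rankPerm n s).symm a : ℕ), Fin.is_lt _, by simp [rank]⟩

theorem kneadingPerm_rank (k : ℕ) : kneadingPerm n s (rank n s k) = rank n s (k + 1) := by
  simp only [kneadingPerm, rank, Equiv.trans_apply, Equiv.symm_apply_apply, Equiv.coe_addRight]
  congr 1
  ext
  simp [Fin.val_add, Nat.add_mod]

theorem kneadingPerm_pow_rank (j k : ℕ) :
    (kneadingPerm n s ^ j) (rank n s k) = rank n s (k + j) := by
  induction j with
  | zero => rfl
  | succ j ih => rw [pow_succ', Equiv.Perm.mul_apply, ih, kneadingPerm_rank, add_assoc]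

theorem rankLabel_rank (hs : IsPeriodicPt shift n s) (k : ℕ) :
    rankLabel n s (rank n s k) = s k := by
  simp [rankLabel, rank, apply_mod_of_isPeriodicPt hs]

theorem isLapLabel_rankLabel (hs : minimalPeriod shift s = n) :
    IsLapLabel (kneadingPerm n s) (rankLabel n s) := by
  have hper : IsPeriodicPt shift n s := hs ▸ isPeriodicPt_minimalPeriod shift s
  have hrank (a : Fin n) : ∃ k, rank n s k = a := (exists_rank_eq a).imp fun _ => And.right
  have hstep (k l : ℕ) : kneadingPerm n s (rank n s k) < kneadingPerm n s (rank n s l) ↔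
      kneadingKey (shift (shift^[k] s)) < kneadingKey (shift (shift^[l] s)) := by
    rw [kneadingPerm_rank, kneadingPerm_rank, rank_lt_rank_iff hs, iterate_succ_apply',
      iterate_succ_apply']
  refine ⟨monotone_bool_of_forall_lt fun y z hy hz => ?_, ?_, ?_⟩
  · obtain ⟨k, rfl⟩ := hrank y
    obtain ⟨l, rfl⟩ := hrank z
    rw [rankLabel_rank hper] at hy hz
    rw [rank_lt_rank_iff hs, kneadingKey_lt_iff_of_ne] <;>
      simp [shift_iterate_apply_zero, hy, hz]
  · rintro y hy z hz hyz
    obtain ⟨k, rfl⟩ := hrank y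
    obtain ⟨l, rfl⟩ := hrank z
    rw [Set.mem_ofPred_eq, rankLabel_rank hper, ← shift_iterate_apply_zero s k] at hy
    rw [Set.mem_ofPred_eq, rankLabel_rank hper, ← shift_iterate_apply_zero s l] at hz
    rwa [hstep, ← kneadingKey_lt_iff_of_false hy hz, ← rank_lt_rank_iff hs]
  · rintro y hy z hz hyz
    obtain ⟨k, rfl⟩ := hrank y
    obtain ⟨l, rfl⟩ := hrank z
    rw [Set.mem_ofPred_eq, rankLabel_rank hper, ← shift_iterate_apply_zero s k] at hy
    rw [Set.mem_ofPred_eq, rankLabel_rank hper, ← shift_iterate_apply_zero s l] at hz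
    rwa [hstep, ← kneadingKey_lt_iff_of_true hy hz, ← rank_lt_rank_iff hs]

theorem isUnimodal_kneadingPerm (hs : minimalPeriod shift s = n) :
    IsUnimodal (kneadingPerm n s) :=
  ⟨_, (isLapLabel_rankLabel hs).isUnimodalPeak⟩

theorem isTransitive_kneadingPerm : IsTransitive (kneadingPerm n s) := by
  intro x y
  obtain ⟨k, hk, rfl⟩ := exists_rank_eq (s := s) x
  obtain ⟨l, -, rfl⟩ := exists_rank_eq (s := s) y
  refine ⟨l + n - k, ?_⟩
  rw [kneadingPerm_pow_rank, Nat.add_sub_cancel' (by omega), rank_add_card]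

theorem eq_of_kneadingPerm_eq {t : ℕ → Bool} (hs : minimalPeriod shift s = n)
    (ht : minimalPeriod shift t = n) (hps : prefixXor s n = true) (hpt : prefixXor t n = true)
    (hδ : kneadingPerm n s = kneadingPerm n t) (h₀ : rank n s 0 = rank n t 0) : s = t := by
  have hper (u : ℕ → Bool) (hu : minimalPeriod shift u = n) : IsPeriodicPt shift n u :=
    hu ▸ isPeriodicPt_minimalPeriod shift u
  have hrank (k : ℕ) : rank n s k = rank n t k := by
    rw [← zero_add k, ← kneadingPerm_pow_rank, ← kneadingPerm_pow_rank, hδ, h₀]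
  -- away from the peak the labels are forced by `kneadingPerm`, at the peak by the parity
  have hoff (k : ℕ) (hk : rank n s k ≠ (kneadingPerm n s).symm ⊤) : s k = t k := by
    rw [← rankLabel_rank (hper s hs), ← rankLabel_rank (hper t ht), ← hrank,
      (isLapLabel_rankLabel hs).label_eq_decide hk,
      (isLapLabel_rankLabel ht).label_eq_decide (by rwa [← hδ]), hδ]
  obtain ⟨k₀, hk₀, hpeak⟩ := exists_rank_eq (s := s) ((kneadingPerm n s).symm ⊤)
  have hbelow (k : ℕ) (hk : k < n) (hne : k ≠ k₀) : s k = t k :=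
    hoff k (hpeak ▸ (rank_eq_rank_iff hk hk₀).not.2 hne)
  have hk₀_eq : s k₀ = t k₀ := by
    by_contra hne
    simpa [hps, hpt] using prefixXor_eq_not_of_ne_at hk₀ hne hbelow
  funext k
  rw [← apply_mod_of_isPeriodicPt (hper s hs), ← apply_mod_of_isPeriodicPt (hper t ht)]
  by_cases hk : k % n = k₀
  · rwa [hk]
  · exact hbelow _ (Nat.mod_lt _ (NeZero.pos n)) hk

end Forward

section Backward

variable {n : ℕ} {δ : Equiv.Perm (Fin n)} {c : Fin n → Bool}

theorem isPeriodicPt_itinerary (ht : IsTransitive δ) (x : Fin n) :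
    IsPeriodicPt shift n (itinerary δ c x) := by
  rw [IsPeriodicPt, IsFixedPt, ← itinerary_iterate, Equiv.Perm.iterate_eq_pow,
    ht.pow_card_apply]

theorem exists_prefixXor_itinerary_peakLabel (ht : IsTransitive δ) (m x : Fin n) :
    ∃ b, prefixXor (itinerary δ (peakLabel m b) x) n = true := by
  obtain ⟨k₀, hk₀, hm⟩ := ht.isCycleOn.exists_pow_eq (Finset.mem_univ x) (Finset.mem_univ m)
  rw [Finset.card_univ, Fintype.card_fin] at hk₀
  have hflip : prefixXor (itinerary δ (peakLabel m true) x) n =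
      !prefixXor (itinerary δ (peakLabel m false) x) n := by
    refine prefixXor_eq_not_of_ne_at hk₀
      (by simp [itinerary, peakLabel, Equiv.Perm.iterate_eq_pow, hm]) fun k hk hne => ?_
    have hkm : (δ ^ k) x ≠ m := fun h =>
      hne (((ht.pow_apply_eq_pow_apply x).1 (h.trans hm.symm)).eq_of_lt_of_lt hk hk₀)
    simp [itinerary, peakLabel, Equiv.Perm.iterate_eq_pow, hkm]
  cases h : prefixXor (itinerary δ (peakLabel m false) x) n
  · exact ⟨true, by rw [hflip, h]; rfl⟩
  · exact ⟨false, h⟩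

variable [NeZero n]

theorem minimalPeriod_itinerary (ht : IsTransitive δ) (hc : IsLapLabel δ c) {x : Fin n}
    (hodd : prefixXor (itinerary δ c x) n = true) : minimalPeriod shift (itinerary δ c x) = n := by
  have hper := isPeriodicPt_itinerary (c := c) ht x
  set p := minimalPeriod shift (itinerary δ c x)
  have hp : 0 < p := hper.minimalPeriod_pos (NeZero.pos n)
  refine (Nat.le_of_dvd (NeZero.pos n) hper.minimalPeriod_dvd).eq_or_lt.resolve_right fun hpn => ?_
  have hy : δ^[n] x = x := ht.pow_card_apply x
  -- the orbits of `x` and `δ^[p] x` have the same itinerary but never meet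
  have hfalse := hc.prefixXor_itinerary_eq_false (z := δ^[p] x)
    (by rw [itinerary_iterate]; exact (isPeriodicPt_minimalPeriod _ _).symm)
    (fun k => by
      rw [← iterate_add_apply, Equiv.Perm.iterate_eq_pow, Equiv.Perm.iterate_eq_pow, Ne,
        ht.pow_apply_eq_pow_apply, Nat.modEq_iff_dvd' (Nat.le_add_right k p),
        Nat.add_sub_cancel_left]
      exact fun hdvd => hpn.not_ge (Nat.le_of_dvd hp hdvd))
    hy (by rw [← iterate_add_apply, add_comm, iterate_add_apply, hy])
  rw [hodd] at hfalse
  exact Bool.noConfusion hfalse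

theorem rank_itinerary (ht : IsTransitive δ) (hc : IsLapLabel δ c) {x : Fin n}
    (hs : minimalPeriod shift (itinerary δ c x) = n) (k : ℕ) :
    rank n (itinerary δ c x) k = (δ ^ k) x := by
  set s := itinerary δ c x
  have hinj : Injective fun i : Fin n => (δ ^ (i : ℕ)) x := fun i j hij =>
    Fin.ext (((ht.pow_apply_eq_pow_apply x).1 hij).eq_of_lt_of_lt i.2 j.2)
  let O : Equiv.Perm (Fin n) := Equiv.ofBijective _ (Finite.injective_iff_bijective.1 hinj)
  have hO (i : Fin n) : shift^[i] s = itinerary δ c (O i) := by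
    rw [← itinerary_iterate, Equiv.Perm.iterate_eq_pow]
    rfl
  have hkey : rotationKey n s ∘ O.symm = fun a => kneadingKey (itinerary δ c a) := by
    funext a
    rw [comp_apply, rotationKey, hO, Equiv.apply_symm_apply]
  have hmono : StrictMono fun a => kneadingKey (itinerary δ c a) := by
    intro a b hab
    refine (hc.kneadingKey_itinerary_lt_iff fun heq => hab.ne ?_).2 hab
    rw [← O.apply_symm_apply a, ← O.apply_symm_apply b, ← hO, ← hO,
      iterate_eq_iterate_iff_of_lt_minimalPeriod ((Fin.is_lt _).trans_eq hs.symm)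
        ((Fin.is_lt _).trans_eq hs.symm)] at heq
    rw [← O.apply_symm_apply a, ← O.apply_symm_apply b, Fin.ext heq]
  have hsort : O.symm = Tuple.sort (rotationKey n s) := by
    refine Tuple.eq_sort_iff.2 ⟨hkey ▸ hmono.monotone, fun i j hij heq => ?_⟩
    exact absurd (hmono.injective ((congrFun hkey i).symm.trans (heq.trans (congrFun hkey j))))
      hij.ne
  simp only [rank, rankPerm, ← hsort, Equiv.symm_symm]
  exact (ht.pow_apply_eq_pow_apply x).2 (Nat.mod_modEq k n)

theorem exists_kneadingPerm_eq (hu : IsUnimodal δ) (ht : IsTransitive δ) (x : Fin n) :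
    ∃ s, (minimalPeriod shift s = n ∧ prefixXor s n = true) ∧
      kneadingPerm n s = δ ∧ rank n s 0 = x := by
  obtain ⟨m, hm⟩ := hu
  obtain ⟨b, hodd⟩ := exists_prefixXor_itinerary_peakLabel ht m x
  have hc := hm.isLapLabel b
  have hs := minimalPeriod_itinerary ht hc hodd
  refine ⟨_, ⟨hs, hodd⟩, Equiv.ext fun a => ?_, rank_itinerary ht hc hs 0⟩
  obtain ⟨k, -, rfl⟩ := exists_rank_eq (s := itinerary δ (peakLabel m b) x) a
  rw [kneadingPerm_rank, rank_itinerary ht hc hs, rank_itinerary ht hc hs, pow_succ',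
    Equiv.Perm.mul_apply]

end Backward

def oddPrimitive (n : ℕ) : Set (ℕ → Bool) :=
  {s | minimalPeriod shift s = n ∧ prefixXor s n = true}

theorem ncard_oddPrimitive (n : ℕ) [NeZero n] :
    (oddPrimitive n).ncard =
      {δ : Equiv.Perm (Fin n) | IsUnimodal δ ∧ IsTransitive δ}.ncard * n := by
  let Φ : oddPrimitive n → {δ : Equiv.Perm (Fin n) | IsUnimodal δ ∧ IsTransitive δ} × Fin n :=
    fun s => (⟨kneadingPerm n s, isUnimodal_kneadingPerm s.2.1, isTransitive_kneadingPerm⟩,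
      rank n s 0)
  have hΦ : Bijective Φ := by
    refine ⟨fun s t hst => Subtype.ext ?_, fun ⟨⟨δ, hu, ht⟩, x⟩ => ?_⟩
    · exact eq_of_kneadingPerm_eq s.2.1 t.2.1 s.2.2 t.2.2 (congrArg (·.1.1) hst)
        (congrArg Prod.snd hst)
    · obtain ⟨s, hs, hδ, hx⟩ := exists_kneadingPerm_eq hu ht x
      exact ⟨⟨s, hs⟩, Prod.ext (Subtype.ext hδ) hx⟩
  rw [← Nat.card_coe_set_eq, Nat.card_congr (Equiv.ofBijective Φ hΦ), Nat.card_prod,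
    Nat.card_coe_set_eq, Nat.card_fin]

section Counting

variable (m : ℕ)

def flipMultiples (s : ℕ → Bool) : ℕ → Bool := fun k => xor (s k) (decide (m ∣ k))

variable {m}

theorem flipMultiples_involutive : Involutive (flipMultiples m) := fun s => by
  funext k
  simp [flipMultiples]

theorem isPeriodicPt_flipMultiples {s : ℕ → Bool} (hs : IsPeriodicPt shift m s) :
    IsPeriodicPt shift m (flipMultiples m s) := by
  funext k
  have hk : s (k + m) = s k := by simpa [iterate_shift_apply] using congrFun hs.eq k
  simp only [flipMultiples, iterate_shift_apply, hk, Nat.dvd_add_self_right]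

variable (m) [NeZero m]

def periodicEquiv : {s | IsPeriodicPt shift m s} ≃ (Fin m → Bool) where
  toFun s i := s.1 i
  invFun w := ⟨fun k => w (Fin.ofNat m k), funext fun k => by
    simp [iterate_shift_apply, Fin.ofNat, Nat.add_mod_right]⟩
  left_inv s := Subtype.ext <| funext fun k => by simp [apply_mod_of_isPeriodicPt s.2]
  right_inv w := funext fun i => by simp

theorem finite_isPeriodicPt : {s | IsPeriodicPt shift m s}.Finite :=
  Set.finite_coe_iff.1 (Finite.of_equiv _ (periodicEquiv m).symm)

theorem ncard_isPeriodicPt : {s | IsPeriodicPt shift m s}.ncard = 2 ^ m := by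
  rw [← Nat.card_coe_set_eq, Nat.card_congr (periodicEquiv m), Nat.card_fun]
  simp

variable {m}

theorem prefixXor_flipMultiples (s : ℕ → Bool) :
    prefixXor (flipMultiples m s) m = !prefixXor s m :=
  prefixXor_eq_not_of_ne_at (NeZero.pos m) (by simp [flipMultiples]) fun k hk hk0 => by
    simp [flipMultiples, Nat.not_dvd_of_pos_of_lt (Nat.pos_of_ne_zero hk0) hk]

def oddPeriodic (m : ℕ) : Set (ℕ → Bool) :=
  {s | IsPeriodicPt shift m s ∧ prefixXor s m = true}

theorem ncard_oddPeriodic : (oddPeriodic m).ncard = 2 ^ (m - 1) := by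
  set E := {s | IsPeriodicPt shift m s ∧ prefixXor s m = false}
  have hunion : oddPeriodic m ∪ E = {s | IsPeriodicPt shift m s} := by
    ext s
    cases h : prefixXor s m <;> simp [oddPeriodic, E, h]
  have hdisj : Disjoint (oddPeriodic m) E :=
    Set.disjoint_left.2 fun s hs ht => by simp_all [oddPeriodic, E]
  have himage : flipMultiples m '' oddPeriodic m = E := by
    rw [flipMultiples_involutive.image_eq_preimage_symm]
    ext s
    simp only [Set.mem_preimage, oddPeriodic, E, Set.mem_ofPred_eq, prefixXor_flipMultiples,
      Bool.not_eq_true']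
    exact and_congr_left fun _ => ⟨fun h => flipMultiples_involutive s ▸
      isPeriodicPt_flipMultiples h, isPeriodicPt_flipMultiples⟩
  have hfin := finite_isPeriodicPt m
  have hcard := Set.ncard_union_eq hdisj (hfin.subset fun s hs => hs.1)
    (hfin.subset fun s hs => hs.1)
  rw [hunion, ncard_isPeriodicPt, ← himage,
    Set.ncard_image_of_injective _ flipMultiples_involutive.injective] at hcard
  have h2 : 2 ^ m = 2 * 2 ^ (m - 1) := by
    rw [← pow_succ', Nat.sub_add_cancel (NeZero.pos m)]
  omega

theorem sum_ncard_oddPrimitive :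
    ∑ q ∈ m.divisors with Odd (m / q), (oddPrimitive q).ncard = 2 ^ (m - 1) := by
  have hfin : (oddPeriodic m).Finite := (finite_isPeriodicPt m).subset fun s hs => hs.1
  rw [← ncard_oddPeriodic, Set.ncard_eq_toFinset_card _ hfin,
    Finset.card_eq_sum_card_fiberwise (f := minimalPeriod shift)]
  · refine Finset.sum_congr rfl fun q hq => ?_
    rw [Finset.mem_filter, Nat.mem_divisors] at hq
    rw [← Set.ncard_coe_finset]
    congr 1
    ext s
    simp only [Finset.coe_filter, Set.Finite.mem_toFinset, oddPeriodic, oddPrimitive,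
      Set.mem_ofPred_eq]
    constructor
    · rintro ⟨rfl, hodd⟩
      have hs : IsPeriodicPt shift m s := isPeriodicPt_iff_minimalPeriod_dvd.2 hq.1.1
      refine ⟨⟨hs, ?_⟩, rfl⟩
      simp [prefixXor_eq_of_isPeriodicPt hs, hodd, hq.2]
    · rintro ⟨⟨hs, hodd⟩, rfl⟩
      rw [prefixXor_eq_of_isPeriodicPt hs, Bool.and_eq_true] at hodd
      exact ⟨rfl, hodd.2⟩
  · intro s hs
    rw [Finset.mem_coe, Set.Finite.mem_toFinset] at hs
    obtain ⟨hs, hodd⟩ := hs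
    rw [prefixXor_eq_of_isPeriodicPt hs, Bool.and_eq_true, decide_eq_true_iff] at hodd
    simpa [hodd.1] using ⟨hs.minimalPeriod_dvd, NeZero.ne m⟩

end Counting

end Kneading

theorem card_transitive_unimodal_general (n : ℕ) :
    (n : ℤ) * ({δ : Equiv.Perm (Fin n) | IsUnimodal δ ∧ IsTransitive δ}.ncard : ℤ) =
      ∑ d ∈ n.divisors.filter (fun d => Odd d),
        (ArithmeticFunction.moebius d : ℤ) * 2 ^ (n / d - 1) := by
  rcases n.eq_zero_or_pos with rfl | hn
  · simp
  have : NeZero n := ⟨hn.ne'⟩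
  have hinv := ArithmeticFunction.eq_sum_odd_moebius_of_sum_odd_cofactor
    (f := fun q => ((oddPrimitive q).ncard : ℤ)) (g := fun m => 2 ^ (m - 1))
    (fun m hm => by
      have : NeZero m := ⟨hm.ne'⟩
      exact_mod_cast sum_ncard_oddPrimitive) hn
  rw [mul_comm, ← Nat.cast_mul, ← ncard_oddPrimitive, hinv]
  simp

/-- The number of transitive unimodal permutations of `{1,...,n}` equals
`(1/n) Σ_{d ∣ n, d odd} μ(d) 2^(n/d - 1)`. -/
theorem card_transitive_unimodal (n : ℕ) (hn : 1 ≤ n) :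
    (n : ℤ) * ({δ : Equiv.Perm (Fin n) | IsUnimodal δ ∧ IsTransitive δ}.ncard : ℤ) =
      ∑ d ∈ n.divisors.filter (fun d => Odd d),
        (ArithmeticFunction.moebius d : ℤ) * 2 ^ (n / d - 1) :=
  card_transitive_unimodal_general n
end

section
/- Suppose δ_1 ∈ Δ(k) and δ_2 ∈ Δ(ℓ) are unimodal with peaks m_1 = δ_1⁻¹(k), m_2 = δ_2⁻¹(ℓ), J ⊆ {1,...,k+ℓ} has |J| = k, and the intertwined sum δ_1 ⊕_J δ_2 is unimodal with peak m. Then for all a ∈ {1,...,k} and b ∈ {1,...,ℓ}: if a > m_1 and b ≥ m_2 then Ω_J(a) > m and Ω̄_J(b) ≥ m; if a ≤ m_1 and b < m_2 then Ω_J(a) ≤ m and Ω̄_J(b) < m; if a > m_1 and b < m_2 then Ω_J(a) > Ω̄_J(b); and if a ≤ m_1 and b ≥ m_2 then Ω_J(a) < Ω̄_J(b). -/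
lemma omegaMap_strictMono {n k : ℕ} (J : Finset (Fin n)) (h : J.card = k) :
    StrictMono (omegaMap J h) := fun _ _ hab => (J.orderIsoOfFin h).strictMono hab

lemma omegaMap_mem {n k : ℕ} (J : Finset (Fin n)) (h : J.card = k) (a : Fin k) :
    omegaMap J h a ∈ J := (J.orderIsoOfFin h a).2

lemma omegaMap_surj {n k : ℕ} (J : Finset (Fin n)) (h : J.card = k) (x : Fin n) (hx : x ∈ J) :
    ∃ a, omegaMap J h a = x := by
  refine ⟨(J.orderIsoOfFin h).symm ⟨x, hx⟩, ?_⟩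
  simp [omegaMap]

lemma peak_max {n : ℕ} {δ : Equiv.Perm (Fin n)} {m : Fin n}
    (h : IsUnimodalPeak δ m) (x : Fin n) : δ x ≤ δ m := by
  rcases lt_trichotomy x m with h' | rfl | h'
  · exact (h.1 x m h' le_rfl).le
  · exact le_rfl
  · exact (h.2 m x le_rfl h').le

/-- Lemma 1: constraints on how two unimodal permutations fit together in a
unimodal intertwined sum `δ = δ₁ ⊕_J δ₂` with peak `m`, assuming
`Ω_J(m₁) < Ω̄_J(m₂)`. -/
theorem lemma_one (k l : ℕ) (δ1 : Equiv.Perm (Fin k)) (δ2 : Equiv.Perm (Fin l))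
    (m1 : Fin k) (m2 : Fin l)
    (h1 : IsUnimodalPeak δ1 m1) (h2 : IsUnimodalPeak δ2 m2)
    (J : Finset (Fin (k + l))) (hJ : J.card = k) (hJc : Jᶜ.card = l)
    (δ : Equiv.Perm (Fin (k + l)))
    (hsum1 : ∀ a : Fin k, δ (omegaMap J hJ a) = omegaMap J hJ (δ1 a))
    (hsum2 : ∀ b : Fin l, δ (omegaMap Jᶜ hJc b) = omegaMap Jᶜ hJc (δ2 b))
    (m : Fin (k + l)) (hm : IsUnimodalPeak δ m)
    (hord : omegaMap J hJ m1 < omegaMap Jᶜ hJc m2) :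
    ∀ (a : Fin k) (b : Fin l),
      (m1 < a → m2 ≤ b → m < omegaMap J hJ a ∧ m ≤ omegaMap Jᶜ hJc b) ∧
      (a ≤ m1 → b < m2 → omegaMap J hJ a ≤ m ∧ omegaMap Jᶜ hJc b < m) ∧
      (m1 < a → b < m2 → omegaMap Jᶜ hJc b < omegaMap J hJ a) ∧
      (a ≤ m1 → m2 ≤ b → omegaMap J hJ a < omegaMap Jᶜ hJc b) := by
  have hΩ : StrictMono (omegaMap J hJ) := omegaMap_strictMono J hJ
  have hΩ' : StrictMono (omegaMap Jᶜ hJc) := omegaMap_strictMono Jᶜ hJc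
  have hne : ∀ (a : Fin k) (b : Fin l), omegaMap J hJ a ≠ omegaMap Jᶜ hJc b := by
    intro a b h
    have hmem := omegaMap_mem Jᶜ hJc b
    rw [← h] at hmem
    exact (Finset.mem_compl.mp hmem) (omegaMap_mem J hJ a)
  -- the peak m is either Ω m1 or Ω̄ m2
  have hmem : m = omegaMap J hJ m1 ∨ m = omegaMap Jᶜ hJc m2 := by
    by_cases hmJ : m ∈ J
    · left
      obtain ⟨c, hc⟩ := omegaMap_surj J hJ m hmJ
      have e1 : δ m = omegaMap J hJ (δ1 c) := by rw [← hc, hsum1]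
      have le1 : δ m ≤ δ (omegaMap J hJ m1) := by
        rw [e1, hsum1]
        exact hΩ.monotone (peak_max h1 c)
      have le2 := peak_max hm (omegaMap J hJ m1)
      exact δ.injective (le_antisymm le1 le2)
    · right
      obtain ⟨c, hc⟩ := omegaMap_surj Jᶜ hJc m (Finset.mem_compl.mpr hmJ)
      have e1 : δ m = omegaMap Jᶜ hJc (δ2 c) := by rw [← hc, hsum2]
      have le1 : δ m ≤ δ (omegaMap Jᶜ hJc m2) := by
        rw [e1, hsum2]
        exact hΩ'.monotone (peak_max h2 c)
      have le2 := peak_max hm (omegaMap Jᶜ hJc m2)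
      exact δ.injective (le_antisymm le1 le2)
  have hm1le : omegaMap J hJ m1 ≤ m := by
    rcases hmem with h | h
    · exact h.ge
    · rw [h]; exact hord.le
  have hlem2 : m ≤ omegaMap Jᶜ hJc m2 := by
    rcases hmem with h | h
    · rw [h]; exact hord.le
    · exact h.le
  intro a b
  refine ⟨?_, ?_, ?_, ?_⟩
  · intro ha hb
    constructor
    · rcases hmem with h | h
      · rw [h]; exact hΩ ha
      · by_contra hcon
        have hlt : omegaMap J hJ a < m :=
          lt_of_le_of_ne (not_lt.mp hcon) (h ▸ hne a m2)
        have := hm.1 (omegaMap J hJ m1) (omegaMap J hJ a) (hΩ ha) hlt.le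
        rw [hsum1, hsum1] at this
        exact absurd (hΩ.lt_iff_lt.mp this) (not_lt.mpr (peak_max h1 a))
    · exact le_trans hlem2 (hΩ'.monotone hb)
  · intro ha hb
    constructor
    · exact le_trans (hΩ.monotone ha) hm1le
    · rcases hmem with h | h
      · by_contra hcon
        have hlt : m < omegaMap Jᶜ hJc b :=
          lt_of_le_of_ne (not_lt.mp hcon) (h ▸ (hne m1 b).symm).symm
        have := hm.2 (omegaMap Jᶜ hJc b) (omegaMap Jᶜ hJc m2) hlt.le (hΩ' hb)
        rw [hsum2, hsum2] at this
        exact absurd (hΩ'.lt_iff_lt.mp this) (not_lt.mpr (peak_max h2 b))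
      · rw [h]; exact hΩ' hb
  · intro ha hb
    by_contra hcon
    have hlt : omegaMap J hJ a < omegaMap Jᶜ hJc b :=
      lt_of_le_of_ne (not_lt.mp hcon) (hne a b)
    rcases hmem with h | h
    · have hma : m ≤ omegaMap Jᶜ hJc b := (h ▸ (hΩ ha)).le.trans hlt.le
      have := hm.2 (omegaMap Jᶜ hJc b) (omegaMap Jᶜ hJc m2) hma (hΩ' hb)
      rw [hsum2, hsum2] at this
      exact absurd (hΩ'.lt_iff_lt.mp this) (not_lt.mpr (peak_max h2 b))
    · have hma : omegaMap J hJ a ≤ m := (hlt.trans (h ▸ hΩ' hb)).le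
      have := hm.1 (omegaMap J hJ m1) (omegaMap J hJ a) (hΩ ha) hma
      rw [hsum1, hsum1] at this
      exact absurd (hΩ.lt_iff_lt.mp this) (not_lt.mpr (peak_max h1 a))
  · intro ha hb
    exact lt_of_le_of_lt (hΩ.monotone ha) (lt_of_lt_of_le hord (hΩ'.monotone hb))
end

section
/- Let δ_1 ∈ Δ_k and δ_2 ∈ Δ_ℓ be transitive unimodal permutations with peaks m_1, m_2, and for a ∈ I_k, b ∈ I_ℓ set a_i = δ_1^i(a), b_i = δ_2^i(b). Then there exists a finite L ≥ 0 such that (a_L > m_1 and b_L < m_2) or (a_L ≤ m_1 and b_L ≥ m_2), while for all i < L either (a_i > m_1 and b_i ≥ m_2) or (a_i ≤ m_1 and b_i < m_2). -/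
/-- A transitive permutation of `Fin k` has order dividing `k` (pointwise). -/
lemma pow_card_apply_aux {k : ℕ} (δ : Equiv.Perm (Fin k)) (ht : IsTransitive δ) (x : Fin k) :
    (δ ^ k) x = x := by
  classical
  match k, δ, ht, x with
  | 0, δ, ht, x => exact x.elim0
  | 1, δ, ht, x => exact Subsingleton.elim _ _
  | (n+2), δ, ht, x =>
    have hfix : ∀ y : Fin (n+2), δ y ≠ y := by
      intro y hy
      have hpow : ∀ i : ℕ, (δ ^ i) y = y := by
        intro i
        induction i with
        | zero => rfl
        | succ m ihm => rw [pow_succ, Equiv.Perm.mul_apply, hy, ihm]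
      obtain ⟨z, hz⟩ := Fintype.exists_ne_of_one_lt_card (by simp) y
      obtain ⟨i, hi⟩ := ht y z
      exact hz (hi.symm.trans (hpow i))
    have hcyc : δ.IsCycle := by
      refine ⟨x, hfix x, fun z _ => ?_⟩
      obtain ⟨i, hi⟩ := ht x z
      exact ⟨(i : ℤ), by simpa using hi⟩
    have hsupp : δ.support = Finset.univ :=
      Finset.eq_univ_iff_forall.mpr (fun y => Equiv.Perm.mem_support.mpr (hfix y))
    have hord : orderOf δ = n + 2 := by
      rw [hcyc.orderOf, hsupp, Finset.card_univ, Fintype.card_fin]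
    have hone := pow_orderOf_eq_one δ
    rw [hord] at hone
    rw [hone]
    rfl

/-- The peak maps to the global maximum. -/
lemma peak_is_max {k : ℕ} (δ : Equiv.Perm (Fin k)) (m : Fin k) (h : IsUnimodalPeak δ m) :
    ∀ z : Fin k, z ≤ δ m := by
  intro z
  obtain ⟨c, rfl⟩ := δ.surjective z
  rcases lt_trichotomy c m with hc | rfl | hc
  · exact le_of_lt (h.1 c m hc le_rfl)
  · exact le_rfl
  · exact le_of_lt (h.2 m c le_rfl hc)

/-- Core contradiction: the classes cannot agree forever. -/
lemma aux_sync_false (k l : ℕ) (δ1 : Equiv.Perm (Fin k)) (δ2 : Equiv.Perm (Fin l))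
    (m1 : Fin k) (m2 : Fin l)
    (h1 : IsUnimodalPeak δ1 m1) (h2 : IsUnimodalPeak δ2 m2)
    (ht1 : IsTransitive δ1) (ht2 : IsTransitive δ2) (a : Fin k) (b : Fin l)
    (hS : ∀ i : ℕ, (m1 < (δ1 ^ i) a ∧ m2 ≤ (δ2 ^ i) b) ∨ ((δ1 ^ i) a ≤ m1 ∧ (δ2 ^ i) b < m2)) :
    False := by
  classical
  obtain ⟨i0, hi0⟩ := ht1 a m1
  obtain ⟨j0, hj0⟩ := ht2 b m2
  have hb0 : (δ2 ^ i0) b < m2 := by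
    rcases hS i0 with h | h
    · rw [hi0] at h; exact absurd h.1 (lt_irrefl m1)
    · exact h.2
  have ha0 : m1 < (δ1 ^ j0) a := by
    rcases hS j0 with h | h
    · exact h.1
    · rw [hj0] at h; exact absurd h.2 (lt_irrefl m2)
  have hka : (δ1 ^ k) a = a := pow_card_apply_aux δ1 ht1 a
  have hmax1 := peak_is_max δ1 m1 h1
  have hmax2 := peak_is_max δ2 m2 h2
  have hstep1 : ∀ s : ℕ, (δ1 ^ (s + 1)) a = δ1 ((δ1 ^ s) a) := by
    intro s; rw [pow_succ', Equiv.Perm.mul_apply]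
  have hstep2 : ∀ s : ℕ, (δ2 ^ (s + 1)) b = δ2 ((δ2 ^ s) b) := by
    intro s; rw [pow_succ', Equiv.Perm.mul_apply]
  by_cases hdeg : ∃ t : ℕ, ¬ ((m1 < (δ1 ^ (i0 + 1 + t)) a) ↔ (m1 < (δ1 ^ (j0 + 1 + t)) a))
  · set T := Nat.find hdeg with hTdef
    have hspec : ¬ ((m1 < (δ1 ^ (i0 + 1 + T)) a) ↔ (m1 < (δ1 ^ (j0 + 1 + T)) a)) :=
      Nat.find_spec hdeg
    have hmin : ∀ τ, τ < T → ((m1 < (δ1 ^ (i0 + 1 + τ)) a) ↔ (m1 < (δ1 ^ (j0 + 1 + τ)) a)) :=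
      fun τ hτ => not_not.mp (Nat.find_min hdeg hτ)
    have inv : ∀ t, t ≤ T →
        (((δ1 ^ (j0 + 1 + t)) a < (δ1 ^ (i0 + 1 + t)) a ∧
          (δ2 ^ (i0 + 1 + t)) b < (δ2 ^ (j0 + 1 + t)) b)
        ∨ ((δ1 ^ (i0 + 1 + t)) a < (δ1 ^ (j0 + 1 + t)) a ∧
          (δ2 ^ (j0 + 1 + t)) b < (δ2 ^ (i0 + 1 + t)) b)) := by
      intro t
      induction t with
      | zero =>
        intro _
        left
        constructor
        · have e1 : (δ1 ^ (i0 + 1 + 0)) a = δ1 m1 := by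
            rw [Nat.add_zero, hstep1, hi0]
          have e2 : (δ1 ^ (j0 + 1 + 0)) a = δ1 ((δ1 ^ j0) a) := by
            rw [Nat.add_zero, hstep1]
          rw [e1, e2]
          refine lt_of_le_of_ne (hmax1 _) ?_
          intro h
          have : (δ1 ^ j0) a = m1 := δ1.injective h
          rw [this] at ha0
          exact absurd ha0 (lt_irrefl m1)
        · have e1 : (δ2 ^ (j0 + 1 + 0)) b = δ2 m2 := by
            rw [Nat.add_zero, hstep2, hj0]
          have e2 : (δ2 ^ (i0 + 1 + 0)) b = δ2 ((δ2 ^ i0) b) := by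
            rw [Nat.add_zero, hstep2]
          rw [e1, e2]
          refine lt_of_le_of_ne (hmax2 _) ?_
          intro h
          have : (δ2 ^ i0) b = m2 := δ2.injective h
          rw [this] at hb0
          exact absurd hb0 (lt_irrefl m2)
      | succ t ih =>
        intro hle
        have htT : t < T := Nat.lt_of_lt_of_le (Nat.lt_succ_self t) hle
        have hI := ih (Nat.le_of_lt htT)
        have hiff := hmin t htT
        have eX : (δ1 ^ (i0 + 1 + (t + 1))) a = δ1 ((δ1 ^ (i0 + 1 + t)) a) := by
          rw [show i0 + 1 + (t + 1) = (i0 + 1 + t) + 1 by omega, hstep1]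
        have eY : (δ1 ^ (j0 + 1 + (t + 1))) a = δ1 ((δ1 ^ (j0 + 1 + t)) a) := by
          rw [show j0 + 1 + (t + 1) = (j0 + 1 + t) + 1 by omega, hstep1]
        have eU : (δ2 ^ (i0 + 1 + (t + 1))) b = δ2 ((δ2 ^ (i0 + 1 + t)) b) := by
          rw [show i0 + 1 + (t + 1) = (i0 + 1 + t) + 1 by omega, hstep2]
        have eV : (δ2 ^ (j0 + 1 + (t + 1))) b = δ2 ((δ2 ^ (j0 + 1 + t)) b) := by
          rw [show j0 + 1 + (t + 1) = (j0 + 1 + t) + 1 by omega, hstep2]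
        rw [eX, eY, eU, eV]
        rcases hS (i0 + 1 + t) with ⟨hx, hu⟩ | ⟨hx, hu⟩
        · have hy : m1 < (δ1 ^ (j0 + 1 + t)) a := hiff.mp hx
          have hv : m2 ≤ (δ2 ^ (j0 + 1 + t)) b := by
            rcases hS (j0 + 1 + t) with h | h
            · exact h.2
            · exact absurd hy (not_lt.mpr h.1)
          rcases hI with ⟨hxy, huv⟩ | ⟨hxy, huv⟩
          · right
            exact ⟨h1.2 _ _ (le_of_lt hy) hxy, h2.2 _ _ hu huv⟩
          · left
            exact ⟨h1.2 _ _ (le_of_lt hx) hxy, h2.2 _ _ hv huv⟩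
        · have hy : (δ1 ^ (j0 + 1 + t)) a ≤ m1 :=
            not_lt.mp (fun hy' => absurd (hiff.mpr hy') (not_lt.mpr hx))
          have hv : (δ2 ^ (j0 + 1 + t)) b < m2 := by
            rcases hS (j0 + 1 + t) with h | h
            · exact absurd h.1 (not_lt.mpr hy)
            · exact h.2
          rcases hI with ⟨hxy, huv⟩ | ⟨hxy, huv⟩
          · left
            exact ⟨h1.1 _ _ hxy hx, h2.1 _ _ huv (le_of_lt hv)⟩
          · right
            exact ⟨h1.1 _ _ hxy hy, h2.1 _ _ huv (le_of_lt hu)⟩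
    have hIT := inv T le_rfl
    rcases hS (i0 + 1 + T) with ⟨hx, hu⟩ | ⟨hx, hu⟩
    · have hy : ¬ m1 < (δ1 ^ (j0 + 1 + T)) a := fun hy' => hspec (iff_of_true hx hy')
      have hv : (δ2 ^ (j0 + 1 + T)) b < m2 := by
        rcases hS (j0 + 1 + T) with h | h
        · exact absurd h.1 hy
        · exact h.2
      rcases hIT with ⟨hxy, huv⟩ | ⟨hxy, huv⟩
      · exact absurd (lt_trans huv hv) (not_lt.mpr hu)
      · exact absurd (lt_of_lt_of_le hxy (not_lt.mp hy)) (not_lt.mpr (le_of_lt hx))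
    · have hy : m1 < (δ1 ^ (j0 + 1 + T)) a := by
        by_contra hy'
        exact hspec (iff_of_false (not_lt.mpr hx) hy')
      have hv : m2 ≤ (δ2 ^ (j0 + 1 + T)) b := by
        rcases hS (j0 + 1 + T) with h | h
        · exact h.2
        · exact absurd hy (not_lt.mpr h.1)
      rcases hIT with ⟨hxy, huv⟩ | ⟨hxy, huv⟩
      · exact absurd (lt_of_lt_of_le hxy hx) (not_lt.mpr (le_of_lt hy))
      · exact absurd (lt_trans huv hu) (not_lt.mpr hv)
  · push_neg at hdeg
    have hk : 0 < k := m1.pos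
    have hiff := hdeg (k - 1)
    have e1 : i0 + 1 + (k - 1) = i0 + k := by omega
    have e2 : j0 + 1 + (k - 1) = j0 + k := by omega
    rw [e1, e2, pow_add, pow_add, Equiv.Perm.mul_apply, Equiv.Perm.mul_apply, hka, hi0] at hiff
    exact absurd (hiff.mpr ha0) (lt_irrefl m1)

/-- Lemma 2: for transitive unimodal `δ₁, δ₂` with peaks `m₁, m₂` and any
starting points `a, b`, the sequence of iterates eventually leaves the classes
`P_{>≥} ∪ P_{≤<}`, i.e. the sequence `S(a,b)` is finite. -/
theorem lemma_two (k l : ℕ) (δ1 : Equiv.Perm (Fin k)) (δ2 : Equiv.Perm (Fin l))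
    (m1 : Fin k) (m2 : Fin l)
    (h1 : IsUnimodalPeak δ1 m1) (h2 : IsUnimodalPeak δ2 m2)
    (ht1 : IsTransitive δ1) (ht2 : IsTransitive δ2) (a : Fin k) (b : Fin l) :
    ∃ L : ℕ,
      ((m1 < (δ1 ^ L) a ∧ (δ2 ^ L) b < m2) ∨ ((δ1 ^ L) a ≤ m1 ∧ m2 ≤ (δ2 ^ L) b)) ∧
      ∀ i < L,
        (m1 < (δ1 ^ i) a ∧ m2 ≤ (δ2 ^ i) b) ∨ ((δ1 ^ i) a ≤ m1 ∧ (δ2 ^ i) b < m2) := by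
  classical
  by_cases hS : ∀ i : ℕ,
      (m1 < (δ1 ^ i) a ∧ m2 ≤ (δ2 ^ i) b) ∨ ((δ1 ^ i) a ≤ m1 ∧ (δ2 ^ i) b < m2)
  · exact (aux_sync_false k l δ1 δ2 m1 m2 h1 h2 ht1 ht2 a b hS).elim
  · obtain ⟨n, hn⟩ := not_forall.mp hS
    have hex : ∃ i : ℕ, ¬ ((m1 < (δ1 ^ i) a ∧ m2 ≤ (δ2 ^ i) b) ∨
        ((δ1 ^ i) a ≤ m1 ∧ (δ2 ^ i) b < m2)) := ⟨n, hn⟩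
    refine ⟨Nat.find hex, ?_, ?_⟩
    · have h := Nat.find_spec hex
      rcases le_or_gt ((δ1 ^ Nat.find hex) a) m1 with h1' | h1' <;>
        rcases lt_or_ge ((δ2 ^ Nat.find hex) b) m2 with h2' | h2' <;> tauto
    · intro i hi
      exact not_not.mp (Nat.find_min hex hi)
end

section
/- The number of permutations of {1,...,n} (in the full symmetric group) possessing no cycle of length k in their disjoint cycle decomposition is n! · Σ_{s=0}^{⌊n/k⌋} (−1/k)^s / s!. -/
/-!
Classify the permutations of an `(n + 1)`-element set by the cycle through a fixed point `a`.
If that cycle has length `m + 1 ≠ k`, it can be listed starting from `a` in `n.descFactorial m`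
ways, and the rest of the permutation is an arbitrary permutation without `k`-cycles of the
remaining `n - m` points. Hence, if `aₙ` counts the permutations of an `n`-element set without
`k`-cycles, `bₙ = aₙ / n!` satisfies `b₀ = 1` and
`(n + 1) bₙ₊₁ = ∑_{1 ≤ ℓ ≤ n + 1, ℓ ≠ k} bₙ₊₁₋ₗ`. The partial sums `∑_{s ≤ n / k} (-1/k)^s / s!`
satisfy the same recursion: they only change when `k ∣ n + 1 = k (q + 1)`, by the term
`(-1/k)^(q+1) / (q+1)!`, which is `-1 / (n + 1)` times the previous term.
-/

open Equiv Function Finset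

theorem Function.Semiconj.minimalPeriod_eq_of_injective {α β : Type*} {g : β → α} {fb : β → β}
    {fa : α → α} (h : Semiconj g fb fa) (hg : Injective g) (x : β) :
    minimalPeriod fa (g x) = minimalPeriod fb x :=
  minimalPeriod_eq_minimalPeriod_iff.2 fun n => by
    simp only [IsPeriodicPt, IsFixedPt, ← (h.iterate_right n) x, hg.eq_iff]

open Fin.CommRing in
theorem Fin.minimalPeriod_add_one (m : ℕ) (i : Fin (m + 1)) :
    minimalPeriod (· + 1) i = m + 1 := by
  have hperiodic : ∀ n, IsPeriodicPt (· + 1) n i ↔ m + 1 ∣ n := fun n => by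
    simp only [IsPeriodicPt, IsFixedPt, add_right_iterate_apply, add_eq_left, nsmul_eq_mul,
      mul_one, Fin.natCast_eq_zero]
  exact Nat.dvd_antisymm ((hperiodic _).2 dvd_rfl).minimalPeriod_dvd
    ((hperiodic _).1 (isPeriodicPt_minimalPeriod _ _))

open Fin.CommRing in
theorem Fin.semiconj_add_one_iff {α : Type*} {m : ℕ} {f : Fin (m + 1) → α} (hf : Injective f)
    {g : α → α} :
    Semiconj f (· + 1) g ↔
      minimalPeriod g (f 0) = m + 1 ∧ ∀ i : Fin (m + 1), g^[i] (f 0) = f i := by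
  constructor
  · intro h
    refine ⟨(h.minimalPeriod_eq_of_injective hf 0).trans (minimalPeriod_add_one m 0), fun i => ?_⟩
    rw [← h.iterate_right i 0, add_right_iterate_apply, nsmul_eq_mul, mul_one, zero_add,
      Fin.cast_val_eq_self]
  · rintro ⟨hper, horbit⟩ i
    calc f (i + 1) = g^[(i + 1 : Fin (m + 1))] (f 0) := (horbit _).symm
      _ = g^[i + 1] (f 0) := by
        rw [← iterate_mod_minimalPeriod_eq (n := i + 1), hper, Fin.val_add, Fin.val_one',
          Nat.add_mod_mod]
      _ = g (f i) := by rw [iterate_succ_apply', horbit]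

theorem card_injective_fin_succ_apply_zero_eq {α : Type*} [Fintype α] [DecidableEq α] (a : α)
    (m : ℕ) :
    #{f : Fin (m + 1) → α | Injective f ∧ f 0 = a} = (Fintype.card α - 1).descFactorial m := by
  let e : {f : Fin (m + 1) → α // Injective f ∧ f 0 = a} ≃ (Fin m ↪ {x // x ≠ a}) :=
    { toFun f := ⟨fun i => ⟨f.1 i.succ, fun h => i.succ_ne_zero (f.2.1 (h.trans f.2.2.symm))⟩,
        fun i j h => Fin.succ_injective _ (f.2.1 (congrArg Subtype.val h))⟩
      invFun g := ⟨Fin.cons a (Subtype.val ∘ g), Fin.cons_injective_iff.2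
        ⟨fun ⟨i, hi⟩ => (g i).2 hi, Subtype.val_injective.comp g.injective⟩, rfl⟩
      left_inv := by
        rintro ⟨f, hf, rfl⟩
        exact Subtype.ext (Fin.cons_self_tail f)
      right_inv g := by ext; simp }
  rw [← Fintype.card_subtype, Fintype.card_congr e, Fintype.card_embedding_eq, Fintype.card_fin,
    Fintype.card_subtype_compl, Fintype.card_subtype_eq]

section ExpPartialSum

variable {K : Type*} [Field K]

def expPartialSum (x : K) (n : ℕ) : K := ∑ s ∈ range n, x ^ s / s.factorial

theorem sum_range_expPartialSum_div [CharZero K] (k N : ℕ) :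
    ∑ m ∈ range N, expPartialSum (-1 / k : K) (m / k + 1) =
      N * expPartialSum (-1 / k : K) (N / k + 1) + expPartialSum (-1 / k : K) (N / k) := by
  induction N with
  | zero => simp [expPartialSum]
  | succ N ih =>
    rw [sum_range_succ, ih, Nat.succ_div]
    split_ifs with hdvd
    · have hk : (k : K) ≠ 0 := by
        rintro h
        simp [Nat.cast_eq_zero.1 h] at hdvd
      have hN : ((N + 1 : ℕ) : K) = k * (N / k + 1 : ℕ) := by
        rw [← Nat.succ_div_of_dvd hdvd]
        exact_mod_cast (Nat.mul_div_cancel' hdvd).symm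
      have key : ((N + 1 : ℕ) : K) * ((-1 / k) ^ (N / k + 1) / (N / k + 1).factorial) =
          -((-1 / k) ^ (N / k) / (N / k).factorial) := by
        rw [hN, pow_succ, Nat.factorial_succ]
        push_cast
        field_simp
      simp only [expPartialSum, sum_range_succ]
      push_cast at key ⊢
      linear_combination -key
    · rw [add_zero]
      push_cast
      ring

theorem sum_range_ite_expPartialSum_eq (x : K) (k n : ℕ) :
    ∑ m ∈ range (n + 1), (if m + 1 = k then 0 else expPartialSum x ((n - m) / k + 1)) =
      ∑ m ∈ range (n + 1), expPartialSum x (m / k + 1) - expPartialSum x ((n + 1) / k) := by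
  have hreflect := sum_range_reflect (fun m => expPartialSum x (m / k + 1)) (n + 1)
  simp only [add_tsub_cancel_right] at hreflect
  have hsplit (m : ℕ) : (if m + 1 = k then 0 else expPartialSum x ((n - m) / k + 1)) =
      expPartialSum x ((n - m) / k + 1) -
        if m + 1 = k then expPartialSum x ((n - m) / k + 1) else 0 := by
    split_ifs <;> simp
  rw [sum_congr rfl fun m _ => hsplit m, sum_sub_distrib, hreflect]
  congr 1
  rcases k with _ | k
  · simp [expPartialSum]
  · simp only [add_left_inj, sum_ite_eq', mem_range]
    split_ifs with hk
    · rw [← Nat.add_div_right _ k.succ_pos, show n - k + k.succ = n + 1 by omega]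
    · rw [Nat.div_eq_of_lt (by omega), expPartialSum, range_zero, sum_empty]

end ExpPartialSum

namespace Equiv.Perm

variable {α β : Type*} {k : ℕ}

def NoCycleOfLength (k : ℕ) (π : Perm α) : Prop := ∀ x, minimalPeriod π x ≠ k

theorem noCycleOfLength_permCongr_iff (e : β ≃ α) (ρ : Perm β) :
    (e.permCongr ρ).NoCycleOfLength k ↔ ρ.NoCycleOfLength k := by
  have h : Semiconj e ρ (e.permCongr ρ) := fun x => by simp
  simp only [NoCycleOfLength, e.surjective.forall, h.minimalPeriod_eq_of_injective e.injective]

section Subtype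

variable {p : α → Prop} [DecidablePred p]

theorem noCycleOfLength_subtypeCongr_iff (c : Perm (Subtype p)) (σ : Perm {x // ¬p x}) :
    (c.subtypeCongr σ).NoCycleOfLength k ↔ c.NoCycleOfLength k ∧ σ.NoCycleOfLength k := by
  have hc : Semiconj Subtype.val c (c.subtypeCongr σ) := fun x =>
    (subtypeCongr.left_apply_subtype c σ x).symm
  have hσ : Semiconj Subtype.val σ (c.subtypeCongr σ) := fun x =>
    (subtypeCongr.right_apply_subtype c σ x).symm
  simp only [NoCycleOfLength, ← hc.minimalPeriod_eq_of_injective Subtype.val_injective,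
    ← hσ.minimalPeriod_eq_of_injective Subtype.val_injective]
  exact ⟨fun h => ⟨fun x => h x, fun x => h x⟩,
    fun h x => if hx : p x then h.1 ⟨x, hx⟩ else h.2 ⟨x, hx⟩⟩

theorem card_noCycleOfLength_extending (c : Perm (Subtype p)) (hc : c.NoCycleOfLength k) :
    Nat.card {π : Perm α // π.NoCycleOfLength k ∧ ∀ x : Subtype p, π x = c x} =
      Nat.card {σ : Perm {x // ¬p x} // σ.NoCycleOfLength k} := by
  symm
  refine Nat.card_eq_of_bijective (fun σ => ⟨c.subtypeCongr σ.1,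
    (noCycleOfLength_subtypeCongr_iff c σ.1).2 ⟨hc, σ.2⟩, subtypeCongr.left_apply_subtype c σ.1⟩)
    ⟨fun σ τ h => ?_, fun π => ?_⟩
  · ext x
    simpa using congr(($h).1 x)
  · obtain ⟨π, hπ, hπc⟩ := π
    have hmaps : ∀ x, ¬p (π x) ↔ ¬p x := fun x => not_congr
      ⟨fun h => by
        have hx : π (c.symm ⟨π x, h⟩) = π x := by rw [hπc]; simp
        exact π.injective hx ▸ (c.symm ⟨π x, h⟩).2,
       fun h => hπc ⟨x, h⟩ ▸ (c ⟨x, h⟩).2⟩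
    have hπσ : c.subtypeCongr (π.subtypePerm hmaps) = π := by
      ext x
      by_cases hx : p x
      · simp [subtypeCongr.left_apply _ _ hx, hπc ⟨x, hx⟩]
      · simp [subtypeCongr.right_apply _ _ hx]
    rw [← hπσ, noCycleOfLength_subtypeCongr_iff] at hπ
    exact ⟨⟨_, hπ.2⟩, Subtype.ext hπσ⟩

end Subtype

theorem card_noCycleOfLength_semiconj {f : β → α} (hf : Injective f) {ρ : Perm β}
    (hρ : ρ.NoCycleOfLength k) :
    Nat.card {π : Perm α // π.NoCycleOfLength k ∧ Semiconj f ρ π} =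
      Nat.card {σ : Perm {x // x ∉ Set.range f} // σ.NoCycleOfLength k} := by
  classical
  set e := Equiv.ofInjective f hf
  have hsemi : ∀ π : Perm α, Semiconj f ρ π ↔ ∀ x : Set.range f, π x = e.permCongr ρ x :=
    fun π => by
      rw [e.surjective.forall]
      simp [Semiconj, e, eq_comm]
  rw [← card_noCycleOfLength_extending (p := (· ∈ Set.range f)) _
    ((noCycleOfLength_permCongr_iff e ρ).2 hρ)]
  exact Nat.card_congr (Equiv.subtypeEquivRight fun π => and_congr_right' (hsemi π))

open Classical in
theorem card_noCycleOfLength_minimalPeriod_eq [Fintype α] (a : α) {m : ℕ} (hm : m + 1 ≠ k) :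
    #{π : Perm α | π.NoCycleOfLength k ∧ minimalPeriod π a = m + 1} =
      ∑ f ∈ ({f : Fin (m + 1) → α | Injective f ∧ f 0 = a} : Finset _),
        Nat.card {σ : Perm {x // x ∉ Set.range f} // σ.NoCycleOfLength k} := by
  refine (card_eq_sum_card_fiberwise (f := fun (π : Perm α) (i : Fin (m + 1)) => π^[i] a)
    fun π hπ => ?_).trans (sum_congr rfl fun f hf => ?_)
  · have hper := (mem_filter.1 hπ).2.2
    refine mem_filter.2 ⟨mem_univ _, fun i j hij => Fin.ext ?_, rfl⟩
    exact iterate_injOn_Iio_minimalPeriod (by rw [Set.mem_Iio, hper]; exact i.isLt)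
      (by rw [Set.mem_Iio, hper]; exact j.isLt) hij
  · obtain ⟨hinj, rfl⟩ := (mem_filter.1 hf).2
    have hρ : (Equiv.addRight (1 : Fin (m + 1))).NoCycleOfLength k := fun i => by
      rwa [coe_addRight, Fin.minimalPeriod_add_one]
    rw [← card_noCycleOfLength_semiconj hinj hρ, Nat.card_eq_fintype_card, Fintype.card_subtype]
    congr 1
    ext π
    simp [coe_addRight, Fin.semiconj_add_one_iff hinj, funext_iff, and_assoc]

open Classical in
theorem card_noCycleOfLength_eq_sum [Fintype α] (a : α) :
    Nat.card {π : Perm α // π.NoCycleOfLength k} =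
      ∑ m ∈ range (Fintype.card α), if m + 1 = k then 0 else
        ∑ f ∈ ({f : Fin (m + 1) → α | Injective f ∧ f 0 = a} : Finset _),
          Nat.card {σ : Perm {x // x ∉ Set.range f} // σ.NoCycleOfLength k} := by
  have hpos (π : Perm α) : 0 < minimalPeriod π a :=
    minimalPeriod_pos_of_mem_periodicPts (π.injective.mem_periodicPts a)
  rw [Nat.card_eq_fintype_card, Fintype.card_subtype,
    card_eq_sum_card_fiberwise (f := fun π : Perm α => minimalPeriod π a - 1)
      (t := range (Fintype.card α)) fun π _ => by
        have := hpos π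
        have := minimalPeriod_le_card (f := π) (x := a)
        simp only [coe_range, Set.mem_Iio]
        omega]
  refine sum_congr rfl fun m _ => ?_
  rw [filter_filter]
  split_ifs with hmk
  · refine card_eq_zero.2 (filter_eq_empty_iff.2 fun π _ ⟨hπ, hm⟩ => hπ a ?_)
    have := hpos π
    omega
  · rw [← card_noCycleOfLength_minimalPeriod_eq a hmk]
    congr 1
    ext π
    have := hpos π
    simp only [mem_filter, mem_univ, true_and]
    exact and_congr_right' (by omega)

theorem card_noCycleOfLength {K : Type*} [Field K] [CharZero K] [Fintype α] :
    (Nat.card {π : Perm α // π.NoCycleOfLength k} : K) =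
      (Fintype.card α).factorial * expPartialSum (-1 / k : K) (Fintype.card α / k + 1) := by
  induction hn : Fintype.card α using Nat.strong_induction_on generalizing α with
  | _ n ih =>
  rcases n with _ | n
  · have : IsEmpty α := Fintype.card_eq_zero_iff.1 hn
    simp [NoCycleOfLength, expPartialSum]
  classical
  obtain ⟨a⟩ : Nonempty α := Fintype.card_pos_iff.1 (by omega)
  rw [card_noCycleOfLength_eq_sum a, hn, Nat.cast_sum]
  trans ∑ m ∈ range (n + 1),
    (n.factorial : K) * if m + 1 = k then 0 else expPartialSum (-1 / k : K) ((n - m) / k + 1)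
  · refine sum_congr rfl fun m hm => ?_
    split_ifs with hmk
    · simp
    have hm : m ≤ n := Nat.lt_succ_iff.1 (mem_range.1 hm)
    have hcard (f : Fin (m + 1) → α) (hf : Injective f) :
        Fintype.card {x // x ∉ Set.range f} = n - m := by
      rw [Fintype.card_subtype_compl, Set.card_range_of_injective hf, hn, Fintype.card_fin]
      omega
    rw [Nat.cast_sum, sum_congr rfl fun f hf =>
        ih (n - m) (by omega) (hcard f (mem_filter.1 hf).2.1),
      sum_const, card_injective_fin_succ_apply_zero_eq, hn, nsmul_eq_mul,
      ← Nat.factorial_mul_descFactorial hm]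
    push_cast
    ring
  · rw [← mul_sum, sum_range_ite_expPartialSum_eq, sum_range_expPartialSum_div,
      Nat.factorial_succ]
    push_cast
    ring

end Equiv.Perm

theorem count_no_k_cycle_general (n k : ℕ) :
    ({π : Equiv.Perm (Fin n) | ∀ x : Fin n,
        Function.minimalPeriod (⇑π) x ≠ k}.ncard : ℚ) =
      (n.factorial : ℚ) *
        ∑ s ∈ Finset.range (n / k + 1), (-(1 : ℚ) / k) ^ s / (s.factorial : ℚ) := by
  have h := Equiv.Perm.card_noCycleOfLength (K := ℚ) (k := k) (α := Fin n)
  rw [Fintype.card_fin] at h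
  exact h

/-- The number of permutations of `{1,...,n}` having no cycle of length `k`
(a point `x` lies on a cycle of length `k` iff its minimal period is `k`;
fixed points are cycles of length 1) equals
`n! · Σ_{s=0}^{⌊n/k⌋} (−1/k)^s / s!`. -/
theorem count_no_k_cycle (n k : ℕ) (hk : 1 ≤ k) :
    ({π : Equiv.Perm (Fin n) | ∀ x : Fin n,
        Function.minimalPeriod (⇑π) x ≠ k}.ncard : ℚ) =
      (n.factorial : ℚ) *
        ∑ s ∈ Finset.range (n / k + 1), (-(1 : ℚ) / k) ^ s / (s.factorial : ℚ) :=
  count_no_k_cycle_general n k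
end

section
/- Every permutation of {1,...,n} avoiding both patterns [2,3,1] and [3,1,2] is an involution, i.e., equals its own inverse (equivalently, all its cycles have length 1 or 2). -/
/-! If `i < j` is an inversion of a permutation `π` avoiding `231` and `312`, then `π` maps the
open interval `(i, j)` onto `(π j, π i)`: a point of `(i, j)` with value outside, or a point
outside with value inside, completes one of the two patterns. Hence `j - i = π i - π j`.

Given `x < π x`, pigeonhole yields `w > x` with `π w ≤ x`. The length identity for the inversion
`(x, w)` forces `π x ≤ w`, so `π (π x) < π x`, and the identity for the inversion `(x, π x)` then
gives `π (π x) = x`. The case `π x < x` follows by passing to `π⁻¹`, which avoids the same two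
patterns because `231` and `312` are inverse to each other. -/

def ContainsPattern {n k : ℕ} (π : Equiv.Perm (Fin n)) (σ : Equiv.Perm (Fin k)) : Prop :=
  ∃ f : Fin k ↪o Fin n, ∀ a b : Fin k, π (f a) < π (f b) ↔ σ a < σ b

open Equiv Finset

theorem containsPattern_iff {n k : ℕ} {π : Perm (Fin n)} {σ : Perm (Fin k)} :
    ContainsPattern π σ ↔ ∃ f : Fin k → Fin n, StrictMono f ∧ StrictMono (π ∘ f ∘ σ.symm) := by
  constructor
  · rintro ⟨f, hf⟩
    refine ⟨f, f.strictMono, fun u v huv => ?_⟩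
    simpa [hf] using huv
  · rintro ⟨f, hf, hπf⟩
    refine ⟨OrderEmbedding.ofStrictMono f hf, fun a b => ?_⟩
    simpa using hπf.lt_iff_lt (a := σ a) (b := σ b)

theorem ContainsPattern.inv {n k : ℕ} {π : Perm (Fin n)} {σ : Perm (Fin k)}
    (h : ContainsPattern π σ) : ContainsPattern π⁻¹ σ⁻¹ := by
  obtain ⟨f, hf, hπf⟩ := containsPattern_iff.1 h
  refine containsPattern_iff.2 ⟨π ∘ f ∘ σ.symm, hπf, ?_⟩
  convert hf using 1
  ext u
  simp [Perm.inv_def]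

theorem containsPattern_231 {n : ℕ} {π : Perm (Fin n)} {a b c : Fin n} (hab : a < b) (hbc : b < c)
    (hπca : π c < π a) (hπab : π a < π b) : ContainsPattern π (finRotate 3) := by
  refine containsPattern_iff.2 ⟨![a, b, c], Fin.strictMono_iff_lt_succ.2 ?_,
    Fin.strictMono_iff_lt_succ.2 ?_⟩
  · intro i; fin_cases i <;> assumption
  · intro i; fin_cases i <;> assumption

theorem containsPattern_312 {n : ℕ} {π : Perm (Fin n)} {a b c : Fin n} (hab : a < b) (hbc : b < c)
    (hπbc : π b < π c) (hπca : π c < π a) : ContainsPattern π (finRotate 3)⁻¹ := by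
  refine containsPattern_iff.2 ⟨![a, b, c], Fin.strictMono_iff_lt_succ.2 ?_,
    Fin.strictMono_iff_lt_succ.2 ?_⟩
  · intro i; fin_cases i <;> assumption
  · intro i; fin_cases i <;> assumption

theorem Equiv.Perm.exists_lt_apply_le_of_lt_apply {α : Type*} [LinearOrder α]
    [LocallyFiniteOrderBot α] {π : Perm α} {x : α} (hx : x < π x) : ∃ w, x < w ∧ π w ≤ x := by
  by_contra! h
  have hmaps : Set.MapsTo ⇑π⁻¹ (Iic x) (Iio x) := by
    intro v hv
    simp only [coe_Iic, coe_Iio, Set.mem_Iic, Set.mem_Iio] at hv ⊢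
    refine lt_of_le_of_ne (not_lt.1 fun hlt => ?_) fun heq => ?_
    · exact (h _ hlt).not_ge (by simpa using hv)
    · exact hx.not_ge (by simpa [← heq] using hv)
  have := card_le_card_of_injOn _ hmaps π⁻¹.injective.injOn
  classical
  rw [← Iio_insert, card_insert_of_notMem (by simp)] at this
  omega

section Avoiding

variable {n : ℕ} {π : Perm (Fin n)}

theorem mem_Ioo_iff_apply_mem_Ioo_of_inversion (h231 : ¬ ContainsPattern π (finRotate 3))
    (h312 : ¬ ContainsPattern π (finRotate 3)⁻¹) {i j k : Fin n} (hij : i < j) (hji : π j < π i) :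
    k ∈ Ioo i j ↔ π k ∈ Ioo (π j) (π i) := by
  simp only [mem_Ioo]
  constructor
  · rintro ⟨hik, hkj⟩
    constructor
    · refine lt_of_le_of_ne (not_lt.1 fun hkj' => h312 ?_) (π.injective.ne hkj.ne')
      exact containsPattern_312 hik hkj hkj' hji
    · refine lt_of_le_of_ne (not_lt.1 fun hik' => h231 ?_) (π.injective.ne hik.ne')
      exact containsPattern_231 hik hkj hji hik'
  · rintro ⟨hjk, hki⟩
    constructor
    · refine lt_of_le_of_ne (not_lt.1 fun hki' => h231 ?_) (by rintro rfl; exact lt_irrefl _ hki)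
      exact containsPattern_231 hki' hij hjk hki
    · refine lt_of_le_of_ne (not_lt.1 fun hjk' => h312 ?_) (by rintro rfl; exact lt_irrefl _ hjk)
      exact containsPattern_312 hij hjk' hjk hki

theorem sub_eq_sub_of_inversion (h231 : ¬ ContainsPattern π (finRotate 3))
    (h312 : ¬ ContainsPattern π (finRotate 3)⁻¹) {i j : Fin n} (hij : i < j) (hji : π j < π i) :
    (j : ℕ) - i = (π i : ℕ) - π j := by
  have himage : (Ioo i j).map π.toEmbedding = Ioo (π j) (π i) := by
    ext v
    rw [mem_map_equiv, mem_Ioo_iff_apply_mem_Ioo_of_inversion h231 h312 hij hji, apply_symm_apply]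
  have hcard := card_map (s := Ioo i j) π.toEmbedding
  rw [himage, Fin.card_Ioo, Fin.card_Ioo] at hcard
  omega

theorem apply_apply_eq_of_lt_apply (h231 : ¬ ContainsPattern π (finRotate 3))
    (h312 : ¬ ContainsPattern π (finRotate 3)⁻¹) {x : Fin n} (hx : x < π x) : π (π x) = x := by
  obtain ⟨w, hxw, hwx⟩ := π.exists_lt_apply_le_of_lt_apply hx
  have hw := sub_eq_sub_of_inversion h231 h312 hxw (hwx.trans_lt hx)
  have hyw : π x ≤ w := by omega
  have hyx : π (π x) < π x := by
    rcases hyw.lt_or_eq with hyw | rfl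
    · exact (mem_Ioo.1 ((mem_Ioo_iff_apply_mem_Ioo_of_inversion h231 h312 hxw
        (hwx.trans_lt hx)).1 (mem_Ioo.2 ⟨hx, hyw⟩))).2
    · exact hwx.trans_lt hx
  have hy := sub_eq_sub_of_inversion h231 h312 hx hyx
  omega

end Avoiding

/-- Every permutation avoiding the patterns `[2,3,1]` (i.e. `finRotate 3`) and
`[3,1,2]` (i.e. `(finRotate 3)⁻¹`) is an involution. -/
theorem avoids_231_312_involution (n : ℕ) (π : Equiv.Perm (Fin n))
    (h1 : ¬ ContainsPattern π (finRotate 3))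
    (h2 : ¬ ContainsPattern π (finRotate 3)⁻¹) :
    π⁻¹ = π := by
  have h1' : ¬ ContainsPattern π⁻¹ (finRotate 3) := fun h => h2 (by simpa using h.inv)
  have h2' : ¬ ContainsPattern π⁻¹ (finRotate 3)⁻¹ := fun h => h1 (by simpa using h.inv)
  refine Equiv.ext fun x => ?_
  rcases lt_trichotomy x (π x) with hx | hx | hx
  · rw [Perm.inv_eq_iff_eq, apply_apply_eq_of_lt_apply h1 h2 hx]
  · rw [Perm.inv_eq_iff_eq, ← hx, ← hx]
  · simpa using apply_apply_eq_of_lt_apply h1' h2' (x := π x) (by simpa using hx)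
end
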